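/- arXiv:2205.01787 — 6 statements merged into one kernel-verified Lean document; each statement's English description precedes it below -/
import Mathlib

section
/- Let D be an ultrafilter over a set I and let f : I → I. Then there is a set X ∈ D such that either f(i) = i for all i ∈ X, or f(i) ∉ X for all i ∈ X. -/
/-!
If `f` fixes a `D`-large set we are done. Otherwise the points moved by `f` form a `D`-large set,
and `I` can be 3-coloured so that `f a` never gets the colour of a moved point `a`. On a finite
set `S` some point has at most one preimage in `S`, hence at most two neighbours in the graph of
`f`, so it can be coloured after the rest of `S`; the infinite case follows by compactness
(de Bruijn–Erdős). One colour class of moved points is then `D`-large, and `f` maps it off itself.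
-/

/-- A filter over a set `I` (here, a type `I`): a collection of subsets of `I` containing
`I` itself, closed under finite (binary) intersections, and upward closed. -/
def IsFilterOn {I : Type*} (D : Set (Set I)) : Prop :=
  Set.univ ∈ D ∧ (∀ X ∈ D, ∀ Y ∈ D, X ∩ Y ∈ D) ∧ ∀ X ∈ D, ∀ Z : Set I, X ⊆ Z → Z ∈ D

/-- A filter `D` over `I` is an ultrafilter if for every `X ⊆ I`,
`X ∈ D` iff the complement `I ∖ X ∉ D`. -/
def IsUltrafilterOn {I : Type*} (D : Set (Set I)) : Prop :=
  IsFilterOn D ∧ ∀ X : Set I, X ∈ D ↔ Xᶜ ∉ D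

open Finset

namespace Function

variable {α : Type*} (f : α → α)

theorem exists_three_coloring_on_finset (S : Finset α) :
    ∃ c : α → Fin 3, ∀ a ∈ S, f a ∈ S → f a ≠ a → c (f a) ≠ c a := by
  classical
  induction S using Finset.strongInduction with
  | _ S ih =>
    rcases S.eq_empty_or_nonempty with rfl | hS
    · exact ⟨0, by simp⟩
    obtain ⟨v, hvS, hfiber⟩ : ∃ v ∈ S, #{a ∈ S | f a = v} < 2 :=
      exists_card_fiber_lt_of_card_lt_mul (by have := hS.card_pos; omega)
    obtain ⟨c, hc⟩ := ih (S.erase v) (erase_ssubset hvS)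
    set forbidden := insert (c (f v)) ({a ∈ S | f a = v}.image c)
    obtain ⟨x, -, hx⟩ : ∃ x ∈ (univ : Finset (Fin 3)), x ∉ forbidden := by
      refine exists_mem_notMem_of_card_lt_card ?_
      calc #forbidden ≤ #({a ∈ S | f a = v}.image c) + 1 := card_insert_le _ _
        _ ≤ #{a ∈ S | f a = v} + 1 := by grw [card_image_le]
        _ < #(univ : Finset (Fin 3)) := by rw [card_univ, Fintype.card_fin]; omega
    refine ⟨update c v x, fun a haS hfaS hfa => ?_⟩
    by_cases hav : a = v
    · subst hav
      rw [update_self, update_of_ne hfa]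
      exact fun h => hx (h ▸ mem_insert_self _ _)
    by_cases hfav : f a = v
    · rw [hfav, update_self, update_of_ne hav]
      exact fun h => hx (h ▸ mem_insert_of_mem (mem_image_of_mem c (by simp [haS, hfav])))
    · rw [update_of_ne hfav, update_of_ne hav]
      exact hc a (mem_erase.2 ⟨hav, haS⟩) (mem_erase.2 ⟨hfav, hfaS⟩) hfa

theorem exists_three_coloring : ∃ c : α → Fin 3, ∀ a, f a ≠ a → c (f a) ≠ c a := by
  let G := SimpleGraph.fromRel fun a b : α => f a = b
  have hfinite (G' : G.Subgraph) (hG' : G'.verts.Finite) :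
      G'.coe →g (⊤ : SimpleGraph (Fin 3)) := Classical.choice <| by
    obtain ⟨c, hc⟩ := exists_three_coloring_on_finset f hG'.toFinset
    refine ⟨⟨fun a => c a, ?_⟩⟩
    rintro ⟨a, ha⟩ ⟨b, hb⟩ hab
    rw [← hG'.mem_toFinset] at ha hb
    obtain ⟨hne, rfl | rfl⟩ := (SimpleGraph.fromRel_adj _ _ _).1 (G'.adj_sub hab)
    · exact (hc a ha hb hne.symm).symm
    · exact hc b hb ha hne
  obtain ⟨φ⟩ := SimpleGraph.nonempty_hom_of_forall_finite_subgraph_hom hfinite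
  refine ⟨φ, fun a ha => (φ.map_rel ?_).symm⟩
  exact (SimpleGraph.fromRel_adj _ _ _).2 ⟨ha.symm, .inl rfl⟩

end Function

theorem Ultrafilter.exists_fixed_or_moving_set {α : Type*} (U : Ultrafilter α) (f : α → α) :
    ∃ X ∈ U, (∀ a ∈ X, f a = a) ∨ ∀ a ∈ X, f a ∉ X := by
  rcases U.em (fun a => f a = a) with hfix | hmove
  · exact ⟨_, hfix, .inl fun _ h => h⟩
  obtain ⟨c, hc⟩ := f.exists_three_coloring
  obtain ⟨k, hk⟩ : ∃ k, ∀ᶠ a in U, c a = k ∧ f a ≠ a :=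
    eventually_exists_iff.1 (hmove.mono fun a ha => ⟨_, rfl, ha⟩)
  exact ⟨_, hk, .inr fun a ⟨hca, ha⟩ ⟨hcfa, _⟩ => hc a ha (hcfa.trans hca.symm)⟩

def IsUltrafilterOn.toUltrafilter {I : Type*} {D : Set (Set I)} (hD : IsUltrafilterOn D) :
    Ultrafilter I :=
  Ultrafilter.ofComplNotMemIff
    { sets := D
      univ_sets := hD.1.1
      sets_of_superset := fun hX hXY => hD.1.2.2 _ hX _ hXY
      inter_sets := fun hX hY => hD.1.2.1 _ hX _ hY }
    fun X => (hD.2 X).symm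

/-- For any ultrafilter `D` over `I` and any `f : I → I`, there is a set `X ∈ D` such that
either `f` fixes every point of `X`, or `f` maps every point of `X` outside of `X`. -/
theorem exists_fixed_or_moving_set {I : Type*} (D : Set (Set I)) (hD : IsUltrafilterOn D)
    (f : I → I) :
    ∃ X ∈ D, (∀ i ∈ X, f i = i) ∨ (∀ i ∈ X, f i ∉ X) :=
  hD.toUltrafilter.exists_fixed_or_moving_set f
end

section
/- Let I be a set and let f : I → I be a function with no fixed points (f(i) ≠ i for all i ∈ I). Then I can be partitioned into three sets X₁, X₂, X₃ such that for each n ∈ {1,2,3} and every i ∈ Xₙ, f(i) ∉ Xₙ. -/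
/-!
By pigeonhole, every nonempty finite `S ⊆ I` contains a point `v` with at most one `f`-preimage
in `S`, so `v` has at most two neighbours in `S` within the graph `i — f i`; colouring `S \ {v}`
first leaves a free colour for `v`. Hence every finite subgraph is 3-colourable, and the
De Bruijn–Erdős compactness theorem 3-colours the whole graph. The colour classes are the `Xₙ`.
-/

open Finset SimpleGraph

namespace Function

variable {I : Type*} (f : I → I)

def functionalGraph : SimpleGraph I := SimpleGraph.fromRel fun i j => f i = j

variable {f}

lemma functionalGraph_adj_apply (hf : ∀ i, f i ≠ i) (i : I) : (functionalGraph f).Adj i (f i) :=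
  (fromRel_adj _ _ _).2 ⟨(hf i).symm, .inl rfl⟩

lemma exists_coloring_of_coloring_erase [DecidableEq I] (hf : ∀ i, f i ≠ i) {S : Finset I}
    {v : I} (hfib : #{u ∈ S | f u = v} ≤ 1) {c : I → Fin 3}
    (hc : ∀ i ∈ S.erase v, f i ∈ S.erase v → c i ≠ c (f i)) :
    ∃ c' : I → Fin 3, ∀ i ∈ S, f i ∈ S → c' i ≠ c' (f i) := by
  set forbidden := insert (c (f v)) ({u ∈ S | f u = v}.image c)
  have hforbidden : #forbidden < #(univ : Finset (Fin 3)) :=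
    calc #forbidden ≤ #{u ∈ S | f u = v} + 1 :=
          (card_insert_le _ _).trans (by grw [card_image_le])
      _ < 3 := by omega
  obtain ⟨x, -, hx⟩ := exists_mem_notMem_of_card_lt_card hforbidden
  refine ⟨update c v x, fun i hi hfi => ?_⟩
  by_cases hiv : i = v
  · subst hiv
    rw [update_self, update_of_ne (hf i)]
    exact fun h => hx (h ▸ mem_insert_self _ _)
  by_cases hfiv : f i = v
  · rw [update_of_ne hiv, hfiv, update_self]
    exact fun h => hx (h ▸ mem_insert_of_mem (mem_image_of_mem c (mem_filter.2 ⟨hi, hfiv⟩)))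
  rw [update_of_ne hiv, update_of_ne hfiv]
  exact hc i (mem_erase.2 ⟨hiv, hi⟩) (mem_erase.2 ⟨hfiv, hfi⟩)

lemma exists_coloring_on_finset (hf : ∀ i, f i ≠ i) (S : Finset I) :
    ∃ c : I → Fin 3, ∀ i ∈ S, f i ∈ S → c i ≠ c (f i) := by
  classical
  induction S using strongInduction with
  | _ S ih =>
    obtain rfl | hS := S.eq_empty_or_nonempty
    · exact ⟨0, by simp⟩
    obtain ⟨v, hv, hfib⟩ : ∃ v ∈ S, #{u ∈ S | f u = v} ≤ 1 :=
      exists_card_fiber_le_of_card_le_mul hS (mul_one _).ge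
    obtain ⟨c, hc⟩ := ih (S.erase v) (erase_ssubset hv)
    exact exists_coloring_of_coloring_erase hf hfib hc

theorem functionalGraph_colorable_three (hf : ∀ i, f i ≠ i) : (functionalGraph f).Colorable 3 :=
  nonempty_hom_of_forall_finite_subgraph_hom fun G' hG' => by
    choose c hc using exists_coloring_on_finset hf hG'.toFinset
    refine ⟨fun v => c v, fun {u v} huv => ?_⟩
    obtain ⟨-, h | h⟩ := (fromRel_adj _ _ _).1 (G'.coe_adj_sub u v huv)
    · exact h ▸ hc u (by simp) (by simp [h])
    · exact (h ▸ hc v (by simp) (by simp [h])).symm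

end Function

/-- If `f : I → I` has no fixed points, then `I` can be partitioned into three sets
`X₁, X₂, X₃` (pairwise disjoint with union `I`) such that `f` maps no point of any
piece into the same piece. -/
theorem three_coloring_of_fixed_point_free {I : Type*} (f : I → I) (hf : ∀ i, f i ≠ i) :
    ∃ X₁ X₂ X₃ : Set I,
      X₁ ∪ X₂ ∪ X₃ = Set.univ ∧
      Disjoint X₁ X₂ ∧ Disjoint X₁ X₃ ∧ Disjoint X₂ X₃ ∧
      (∀ i ∈ X₁, f i ∉ X₁) ∧ (∀ i ∈ X₂, f i ∉ X₂) ∧ (∀ i ∈ X₃, f i ∉ X₃) := by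
  obtain ⟨c⟩ := Function.functionalGraph_colorable_three hf
  have avoid (k : Fin 3) : ∀ i ∈ c ⁻¹' {k}, f i ∉ c ⁻¹' {k} :=
    fun i hi hfi => c.valid (Function.functionalGraph_adj_apply hf i) (hi.trans hfi.symm)
  have disj {k l : Fin 3} (hkl : k ≠ l) : Disjoint (c ⁻¹' {k}) (c ⁻¹' {l}) :=
    (Set.disjoint_singleton.2 hkl).preimage c
  refine ⟨c ⁻¹' {0}, c ⁻¹' {1}, c ⁻¹' {2}, ?_, disj (by decide), disj (by decide),
    disj (by decide), avoid 0, avoid 1, avoid 2⟩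
  ext i
  simp only [Set.mem_union, Set.mem_preimage, Set.mem_singleton_iff, Set.mem_univ, iff_true]
  omega
end

section
/- Every uncountable measurable cardinal is strongly inaccessible: if κ is an uncountable cardinal carrying a nonprincipal κ-complete ultrafilter over κ, then κ is regular, uncountable, and a strong limit (for all λ < κ, 2^λ < κ). -/
/-!
A nonprincipal `κ`-complete ultrafilter contains no set of size `< κ`, since such a set is the
complement of an intersection of `< κ` co-singletons. Hence `α` is not a union of fewer than `κ`
sets of size `< κ`, which is exactly regularity of `κ = #α`. For the strong limit property,
embed `α` into `Set μ` with `μ < κ`: by completeness the ultrafilter decides all `μ` coordinates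
at once, so it contains a set on which the embedding is constant, i.e. a subsingleton.
-/

universe u

open Cardinal Set

theorem exists_iUnion_eq_univ_of_cof_ord_mk_lt {α : Type u} (hα : ℵ₀ ≤ #α)
    (hcof : (#α).ord.cof < #α) :
    ∃ (ι : Type u) (t : ι → Set α), #ι < #α ∧ (∀ i, #(t i) < #α) ∧ ⋃ i, t i = Set.univ := by
  set β := (#α).ord.ToType
  have hβ : #β = #α := mk_ord_toType _
  obtain ⟨e⟩ : Nonempty (α ≃ β) := Cardinal.eq.1 hβ.symm
  obtain ⟨S, hS, hSmk⟩ := Order.exists_cof_eq β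
  rw [Ordinal.cof_toType] at hSmk
  refine ⟨S, fun b => e ⁻¹' Iic b.1, hSmk ▸ hcof, fun b => ?_, ?_⟩
  · rw [mk_preimage_equiv]
    have := mk_Iic_lt b.1 (by rw [hβ]; simp [β]) (hβ ▸ hα)
    rwa [hβ] at this
  · refine eq_univ_of_forall fun a => ?_
    obtain ⟨b, hb, hab⟩ := hS (e a)
    exact mem_iUnion.2 ⟨⟨b, hb⟩, hab⟩

namespace Ultrafilter

variable {α : Type u} {U : Ultrafilter α}

theorem singleton_notMem_of_nonprincipal (h : ¬ ∃ Y : Set α, ∀ X : Set α, X ∈ U ↔ Y ⊆ X)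
    (a : α) : {a} ∉ U := by
  intro ha
  obtain ⟨b, rfl, rfl⟩ := eq_pure_of_finite_mem (finite_singleton a) ha
  exact h ⟨{b}, fun X => by rw [mem_pure, singleton_subset_iff]⟩

theorem subsingleton_notMem (hne : ∀ a, {a} ∉ U) {s : Set α} (hs : s.Subsingleton) : s ∉ U := by
  rcases hs.eq_empty_or_singleton with rfl | ⟨a, rfl⟩
  exacts [empty_notMem, hne a]

def IsComplete (U : Ultrafilter α) (κ : Cardinal.{u}) : Prop :=
  ∀ s : Set (Set α), #s < κ → (∀ X ∈ s, X ∈ U) → ⋂₀ s ∈ U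

namespace IsComplete

variable {κ : Cardinal.{u}} (hU : U.IsComplete κ)
include hU

theorem iInter_mem {ι : Type u} {t : ι → Set α} (hι : #ι < κ) (ht : ∀ i, t i ∈ U) :
    ⋂ i, t i ∈ U := by
  rw [← sInter_range]
  exact hU _ (mk_range_le.trans_lt hι) (forall_mem_range.2 ht)

theorem notMem_of_mk_lt (hne : ∀ a, {a} ∉ U) {s : Set α} (hs : #s < κ) : s ∉ U := by
  have hcompl : ⋂ a : s, ({a.1}ᶜ : Set α) ∈ U :=
    hU.iInter_mem hs fun a => compl_mem_iff_notMem.2 (hne a)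
  rwa [← compl_iUnion, iUnion_coe_set, biUnion_of_singleton, compl_mem_iff_notMem] at hcompl

theorem iUnion_notMem (hne : ∀ a, {a} ∉ U) {ι : Type u} {t : ι → Set α} (hι : #ι < κ)
    (ht : ∀ i, #(t i) < κ) : ⋃ i, t i ∉ U := by
  rw [← compl_mem_iff_notMem, compl_iUnion]
  exact hU.iInter_mem hι fun i => compl_mem_iff_notMem.2 (hU.notMem_of_mk_lt hne (ht i))

theorem eventually_forall_mem_iff {ι : Type u} (hι : #ι < κ) (A : ι → Set α) :
    ∀ᶠ a in (U : Filter α), ∀ i, a ∈ A i ↔ A i ∈ U := by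
  rw [Filter.Eventually, ofPred_forall]
  refine hU.iInter_mem hι fun i => ?_
  by_cases hi : A i ∈ U
  · simp only [hi, iff_true, ofPred_mem_eq]
  · simp only [hi, iff_false]
    exact compl_mem_iff_notMem.2 hi

theorem two_power_lt_mk (hne : ∀ a, {a} ∉ U) {μ : Cardinal.{u}} (hμ : μ < κ) : 2 ^ μ < #α := by
  by_contra! hle
  obtain ⟨f⟩ : #α ≤ #(Set μ.out) := by rwa [mk_set, mk_out]
  set A : μ.out → Set α := fun i => {a | i ∈ f a}
  refine subsingleton_notMem hne (fun a ha b hb => f.injective ?_)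
    (hU.eventually_forall_mem_iff (by rwa [mk_out]) A)
  ext i
  exact (ha i).trans (hb i).symm

end IsComplete

theorem IsComplete.isRegular_mk (hU : U.IsComplete #α) (hne : ∀ a, {a} ∉ U) (hα : ℵ₀ ≤ #α) :
    (#α).IsRegular := by
  refine ⟨hα, not_lt.1 fun hcof => ?_⟩
  obtain ⟨ι, t, hι, ht, hcover⟩ := exists_iUnion_eq_univ_of_cof_ord_mk_lt hα hcof
  exact hU.iUnion_notMem hne hι ht (hcover ▸ Filter.univ_mem)

end Ultrafilter

/-- Every uncountable measurable cardinal is strongly inaccessible: if `κ` is an uncountable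
cardinal (the cardinality of a set `α`) carrying a nonprincipal `κ`-complete ultrafilter over
that set, then `κ` is regular, uncountable, and a strong limit. -/
theorem measurable_is_inaccessible {α : Type u} (κ : Cardinal.{u}) (hκ : Cardinal.mk α = κ)
    (huncountable : Cardinal.aleph0 < κ) (U : Ultrafilter α)
    (hnonprincipal : ¬ ∃ Y : Set α, ∀ X : Set α, X ∈ U ↔ Y ⊆ X)
    (hcomplete : ∀ s : Set (Set α), Cardinal.mk s < κ → (∀ X ∈ s, X ∈ U) → ⋂₀ s ∈ U) :
    κ.IsRegular ∧ Cardinal.aleph0 < κ ∧ ∀ μ : Cardinal.{u}, μ < κ → 2 ^ μ < κ := by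
  subst hκ
  have hne := Ultrafilter.singleton_notMem_of_nonprincipal hnonprincipal
  have hU : U.IsComplete #α := hcomplete
  exact ⟨hU.isRegular_mk hne huncountable.le, huncountable,
    fun μ hμ => hU.two_power_lt_mk hne hμ⟩
end

section
/- If κ is an uncountable measurable cardinal, then κ is the κ-th strongly inaccessible cardinal; in particular, the set of strongly inaccessible cardinals below κ has cardinality κ. -/
universe u v

/-!
By `κ`-completeness and nonprincipality, sets of size `< κ` are null, so an enumeration of `α`
in order type `κ` eventually exceeds each ordinal below `κ`, and then, again by completeness,
all members of a cofinal family of length `< κ` at once: impossible, so `κ` is regular. An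
injection of `α` into `𝒫 λ` with `λ < κ` is a.e. constant coordinate by coordinate, hence
a.e. constant, contradicting nonprincipality: `κ` is a strong limit.

Countable completeness makes the ultrapower of the ordinals well-founded, so there is a least
`f : α → Ordinal` eventually exceeding every ordinal below `κ`. A function below `f` is then
a.e. bounded below `κ`, hence a.e. constant. If almost every `f a` failed to be an inaccessible
cardinal, the failure would be witnessed by smaller ordinals (its cardinal, a cofinal sequence,
or some `λ` with `2^λ ≥ |f a|`); these are a.e. constant and then bound `f` below `κ`. Hence
almost every `f a` is inaccessible, these values are unbounded in `κ`, and since `κ` is regular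
there are `κ` many of them.
-/

open Cardinal Filter Order Set

theorem Filter.wellFounded_eventually_lt {α β : Type*} {l : Filter α} [l.NeBot]
    [CountableInterFilter l] [Preorder β] [WellFoundedLT β] :
    WellFounded fun f g : α → β ↦ ∀ᶠ a in l, f a < g a := by
  refine wellFounded_iff_isEmpty_descending_chain.2 ⟨fun ⟨F, hF⟩ ↦ ?_⟩
  obtain ⟨a, ha⟩ := (eventually_countable_forall.2 hF).exists
  exact (wellFounded_iff_isEmpty_descending_chain.1 wellFounded_lt).false ⟨(F · a), ha⟩

theorem Ordinal.exists_iSup_add_one_eq_of_ord_cof_eq {o a : Ordinal.{u}} (h : o.cof.ord = a) :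
    ∃ t : a.ToType → Ordinal.{u}, (∀ i, t i < o) ∧ ⨆ i, t i + 1 = o := by
  subst h
  obtain ⟨s, hs⟩ := Ordinal.exists_isFundamentalSeq rfl
  refine ⟨fun i ↦ s (Ordinal.ToType.mk.symm i), fun i ↦ (s _).2, ?_⟩
  exact (Ordinal.ToType.mk.symm.toEquiv.iSup_comp (g := fun j ↦ (s j : Ordinal) + 1)).trans
    hs.iSup_add_one_eq

section CardinalInter

variable {α : Type u} {κ : Cardinal.{u}} {l : Filter α} [CardinalInterFilter l κ]

theorem Filter.compl_mem_of_le_cofinite_of_mk_lt (hl : l ≤ cofinite) {s : Set α} (hs : #s < κ) :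
    sᶜ ∈ l :=
  ((eventually_cardinal_ball hs).2 fun x _ ↦ hl (finite_singleton x).compl_mem_cofinite).mono
    fun _ ha has ↦ ha _ has rfl

theorem Filter.exists_forall_eventually_lt_ord (hl : l ≤ cofinite) (hα : #α = κ) (hκ : ℵ₀ ≤ κ) :
    ∃ d : α → Ordinal.{u}, (∀ a, d a < κ.ord) ∧ ∀ β < κ.ord, ∀ᶠ a in l, β < d a := by
  obtain ⟨e⟩ : Nonempty (α ≃ Iio κ.ord) :=
    lift_mk_eq'.1 (by simp [mk_Iio_ordinal, hα])
  refine ⟨fun a ↦ e a, fun a ↦ (e a).2, fun β hβ ↦ ?_⟩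
  have hsmall : #((fun a ↦ (e a : Ordinal)) ⁻¹' Iic β) < κ := by
    rw [← lift_lt.{u, u + 1}]
    calc lift.{u + 1} #((fun a ↦ (e a : Ordinal)) ⁻¹' Iic β)
        ≤ lift.{u} #(Iic β) :=
          mk_preimage_of_injective_lift _ _ (Subtype.val_injective.comp e.injective)
      _ = lift.{u + 1} (succ β).card := by rw [← Iio_succ, mk_Iio_ordinal, lift_id'.{u, u + 1}]
      _ < lift.{u + 1} κ := lift_lt.2 (lt_ord.1 ((isSuccLimit_ord hκ).succ_lt hβ))
  filter_upwards [compl_mem_of_le_cofinite_of_mk_lt hl hsmall] with a ha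
  simpa using ha

theorem Filter.le_cof_of_forall_eventually_lt [l.NeBot] {o : Ordinal.{u}} {d : α → Ordinal.{u}}
    (hd : ∀ a, d a < o) (hunb : ∀ β < o, ∀ᶠ a in l, β < d a) : κ ≤ o.cof := by
  by_contra! h
  obtain ⟨t, ht, hsup⟩ := Ordinal.exists_iSup_add_one_eq_of_ord_cof_eq (o := o) rfl
  have hι : #o.cof.ord.ToType < κ := by rwa [mk_toType, card_ord]
  obtain ⟨a, ha⟩ := ((eventually_cardinal_forall hι).2 fun i ↦ hunb _ (ht i)).exists
  obtain ⟨i, hi⟩ := Ordinal.lt_iSup_iff.1 (hsup ▸ hd a)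
  exact (ha i).not_ge (lt_add_one_iff.1 hi)

end CardinalInter

namespace Ultrafilter

variable {α : Type u} {U : Ultrafilter α}

section CardinalInter

variable {κ : Cardinal.{u}} [CardinalInterFilter (U : Filter α) κ]

theorem exists_eventually_eq_of_lift_mk_lt {β : Type v} {g : α → β} {s : Set β}
    (hs : lift.{u} #s < lift.{v} κ) (hg : ∀ᶠ a in U, g a ∈ s) : ∃ b ∈ s, ∀ᶠ a in U, g a = b := by
  by_contra! h
  have hne : ∀ t ∈ (fun b ↦ {a | g a ≠ b}) '' s, t ∈ U := by
    rintro _ ⟨b, hb, rfl⟩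
    exact h b hb
  have hcard : #((fun b ↦ {a | g a ≠ b}) '' s) < κ := by
    rw [← lift_lt.{u, v}]
    exact mk_image_le_lift.trans_lt hs
  obtain ⟨a, hgs, ha⟩ := (hg.and ((cardinal_sInter_mem hcard).2 hne)).exists
  exact ha _ ⟨g a, hgs, rfl⟩ rfl

theorem isStrongPrelimit_of_mk_eq (hU : (U : Filter α) ≤ cofinite) (hα : #α = κ) :
    IsStrongPrelimit κ := by
  intro c hc
  by_contra! hle
  obtain ⟨e⟩ : Nonempty (α ↪ Set c.out) := by rw [← Cardinal.le_def, mk_set, mk_out, hα]; exact hle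
  set S := {x | ∀ᶠ a in U, x ∈ e a}
  have hS : ∀ x, ∀ᶠ a in U, (x ∈ e a ↔ x ∈ S) := fun x ↦ by
    by_cases hx : x ∈ S
    · exact hx.mono fun a ha ↦ iff_of_true ha hx
    · exact (U.eventually_not.2 hx).mono fun a ha ↦ iff_of_false ha hx
  have hT : {a | e a = S} ∈ U :=
    ((eventually_cardinal_forall (by rwa [mk_out])).2 hS).mono fun a ha ↦ Set.ext ha
  have hsub : {a | e a = S}.Subsingleton := fun a ha b hb ↦ e.injective (ha.trans hb.symm)
  exact U.compl_notMem_iff.2 hT (hU hsub.finite.compl_mem_cofinite)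

end CardinalInter

variable {o : Ordinal.{u}} {f : α → Ordinal.{u}}

/-- In the ultrapower by `U`, `f` represents the least ordinal above all constants below `o`. -/
structure IsLeastUnbounded (U : Ultrafilter α) (o : Ordinal.{u}) (f : α → Ordinal.{u}) : Prop where
  eventually_lt : ∀ᶠ a in U, f a < o
  eventually_gt : ∀ β < o, ∀ᶠ a in U, β < f a
  exists_eventually_le : ∀ g : α → Ordinal.{u}, (∀ᶠ a in U, g a < f a) →
    ∃ β < o, ∀ᶠ a in U, g a ≤ β

theorem exists_isLeastUnbounded [CountableInterFilter (U : Filter α)] {d : α → Ordinal.{u}}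
    (hd : ∀ a, d a < o) (hunb : ∀ β < o, ∀ᶠ a in U, β < d a) :
    ∃ f, IsLeastUnbounded U o f := by
  obtain ⟨f, hf, hmin⟩ :=
    (Filter.wellFounded_eventually_lt (l := (U : Filter α)) (β := Ordinal.{u})).has_min
    {g : α → Ordinal.{u} | ∀ β < o, ∀ᶠ a in U, β < g a} ⟨d, hunb⟩
  refine ⟨f, ?_, hf, fun g hg ↦ ?_⟩
  · filter_upwards [U.eventually_not.2 (hmin d hunb)] with a ha
    exact (not_lt.1 ha).trans_lt (hd a)
  · by_contra! h
    exact hmin g (fun β hβ ↦ by simpa using h β hβ) hg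

namespace IsLeastUnbounded

theorem eventually_lt_card {κ : Cardinal.{u}} (hf : IsLeastUnbounded U κ.ord f)
    (hκ : IsSuccLimit κ) {c : Cardinal.{u}} (hc : c < κ) : ∀ᶠ a in U, c < (f a).card :=
  (hf.eventually_gt _ (ord_lt_ord.2 (hκ.succ_lt hc))).mono fun _ ha ↦
    succ_le_iff.1 (ord_le.1 ha.le)

variable {κ : Cardinal.{u}} [CardinalInterFilter (U : Filter α) κ]

theorem exists_eventually_eq (hf : IsLeastUnbounded U κ.ord f) (hκ : ℵ₀ ≤ κ) {g : α → Ordinal.{u}}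
    (hg : ∀ᶠ a in U, g a < f a) : ∃ γ < κ.ord, ∀ᶠ a in U, g a = γ := by
  obtain ⟨β, hβ, hgβ⟩ := hf.exists_eventually_le g hg
  have hs : lift.{u} #(Iic β) < lift.{u + 1} κ := by
    rw [← Iio_succ, mk_Iio_ordinal, lift_lift, lift_lt]
    exact lt_ord.1 ((isSuccLimit_ord hκ).succ_lt hβ)
  obtain ⟨γ, hγβ, hγ⟩ := exists_eventually_eq_of_lift_mk_lt hs hgβ
  exact ⟨γ, (mem_Iic.1 hγβ).trans_lt hβ, hγ⟩

theorem eventually_of_exists_lt_le (hf : IsLeastUnbounded U κ.ord f) (hκ : ℵ₀ ≤ κ)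
    {P : Ordinal.{u} → Prop} (H : Ordinal.{u} → Ordinal.{u}) (hH : ∀ γ < κ.ord, H γ < κ.ord)
    (hP : ∀ x, ¬ P x → ∃ y < x, x ≤ H y) : ∀ᶠ a in U, P (f a) := by
  by_contra h
  replace h := U.eventually_not.2 h
  choose! w hw using hP
  obtain ⟨γ, hγ, hwγ⟩ := hf.exists_eventually_eq hκ (g := fun a ↦ w (f a))
    (h.mono fun a ha ↦ (hw _ ha).1)
  obtain ⟨a, ha, hwa, hgt⟩ := (h.and (hwγ.and (hf.eventually_gt _ (hH γ hγ)))).exists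
  exact ((hw _ ha).2.trans_eq (congrArg H hwa)).not_gt hgt

theorem eventually_ord_card_eq (hf : IsLeastUnbounded U κ.ord f) (hκ : IsSuccLimit κ) :
    ∀ᶠ a in U, (f a).card.ord = f a := by
  refine hf.eventually_of_exists_lt_le (P := fun x ↦ x.card.ord = x)
    (aleph0_le_of_isSuccLimit hκ) (fun y ↦ (succ y.card).ord)
    (fun γ hγ ↦ ord_lt_ord.2 (hκ.succ_lt (lt_ord.1 hγ))) fun x hx ↦ ?_
  refine ⟨x.card.ord, (ord_card_le x).lt_of_ne hx, ?_⟩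
  rw [card_ord]
  exact (lt_ord_succ_card x).le

theorem eventually_isStrongPrelimit_card (hf : IsLeastUnbounded U κ.ord f)
    (hκ : κ.IsStrongLimit) : ∀ᶠ a in U, IsStrongPrelimit (f a).card := by
  refine hf.eventually_of_exists_lt_le (P := fun x ↦ IsStrongPrelimit x.card) hκ.aleph0_le
    (fun y ↦ (succ ((2 : Cardinal) ^ y.card)).ord)
    (fun γ hγ ↦ ord_lt_ord.2 (hκ.isSuccLimit.succ_lt (hκ.isStrongPrelimit (lt_ord.1 hγ))))
    fun x hx ↦ ?_
  obtain ⟨c, hc, hcx⟩ := not_isStrongPrelimit_iff.1 hx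
  refine ⟨c.ord, (ord_lt_ord.2 hc).trans_le (ord_card_le x), ?_⟩
  rw [card_ord]
  exact (card_le_iff.1 hcx).le

-- A cofinal family of length `cof (f a)` is coordinatewise a.e. constant, hence bounded below `κ`.
theorem eventually_ord_cof_eq (hf : IsLeastUnbounded U κ.ord f) (hκ : κ.IsRegular) :
    ∀ᶠ a in U, (f a).cof.ord = f a := by
  by_contra h
  obtain ⟨γ, hγ, hcof⟩ := hf.exists_eventually_eq hκ.aleph0_le
    ((U.eventually_not.2 h).mono fun a ha ↦ (Ordinal.ord_cof_le _).lt_of_ne ha)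
  have ht : ∀ a, ∃ t : γ.ToType → Ordinal.{u}, (f a).cof.ord = γ →
      (∀ i, t i < f a) ∧ ⨆ i, t i + 1 = f a := fun a ↦ by
    by_cases ha : (f a).cof.ord = γ
    · obtain ⟨t, ht⟩ := Ordinal.exists_iSup_add_one_eq_of_ord_cof_eq ha
      exact ⟨t, fun _ ↦ ht⟩
    · exact ⟨0, fun h ↦ absurd h ha⟩
  choose t ht using ht
  choose β hβ hβt using fun i ↦ hf.exists_eventually_eq hκ.aleph0_le (g := (t · i))
    (hcof.mono fun a ha ↦ (ht a ha).1 i)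
  have hι : #γ.ToType < κ := by rwa [mk_toType, ← lt_ord]
  have hsup : ⨆ i, β i + 1 < κ.ord :=
    Ordinal.iSup_add_one_lt_of_lt_cof (by rwa [hκ.cof_ord]) hβ
  obtain ⟨a, ha, hta, hgt⟩ :=
    (hcof.and (((eventually_cardinal_forall hι).2 hβt).and (hf.eventually_gt _ hsup))).exists
  refine hgt.ne' ?_
  rw [← (ht a ha).2]
  simp only [hta]

theorem eventually_isInaccessible_card (hf : IsLeastUnbounded U κ.ord f) (hκ : κ.IsInaccessible) :
    ∀ᶠ a in U, (f a).card.IsInaccessible := by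
  filter_upwards [hf.eventually_lt_card hκ.isSuccLimit hκ.aleph0_lt,
    hf.eventually_ord_card_eq hκ.isSuccLimit, hf.eventually_ord_cof_eq hκ.isRegular,
    hf.eventually_isStrongPrelimit_card hκ.isStrongLimit] with a h0 hcard hcof hlim
  refine ⟨h0, ?_, hlim⟩
  rw [hcard]
  exact ((congrArg Ordinal.card hcof.symm).trans (card_ord _)).le

theorem exists_isInaccessible_btwn (hf : IsLeastUnbounded U κ.ord f) (hκ : κ.IsInaccessible)
    {c : Cardinal.{u}} (hc : c < κ) : ∃ μ, c < μ ∧ μ < κ ∧ μ.IsInaccessible := by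
  obtain ⟨a, ⟨hμ, hcμ⟩, hμκ⟩ := (hf.eventually_isInaccessible_card hκ |>.and
    (hf.eventually_lt_card hκ.isSuccLimit hc) |>.and hf.eventually_lt).exists
  exact ⟨_, hcμ, lt_ord.1 hμκ, hμ⟩

end IsLeastUnbounded

end Ultrafilter

theorem Cardinal.mk_subtype_lt_eq_lift_of_isRegular {κ : Cardinal.{u}} (hκ : κ.IsRegular)
    {P : Cardinal.{u} → Prop} (hP : ∀ c < κ, ∃ μ, c < μ ∧ μ < κ ∧ P μ) :
    #{μ // μ < κ ∧ P μ} = lift.{u + 1} κ := by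
  refine le_antisymm ?_ ?_
  · calc #{μ // μ < κ ∧ P μ}
        ≤ #(Iio κ.ord) := mk_le_of_injective (f := fun μ ↦ ⟨μ.1.ord, ord_lt_ord.2 μ.2.1⟩)
          fun μ ν h ↦ Subtype.ext (ord_injective (congrArg Subtype.val h))
      _ = lift.{u + 1} κ := by rw [mk_Iio_ordinal, card_ord]
  · by_contra! h
    have hsup : ⨆ μ : {μ // μ < κ ∧ P μ}, μ.1 < κ :=
      lift_iSup_lt_of_lt_cof_ord
        (by rwa [← lift_ord, ← Ordinal.lift_cof, hκ.cof_ord, lift_id'.{u, u + 1}]) fun μ ↦ μ.2.1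
    obtain ⟨μ, hμ, hμκ, hPμ⟩ := hP _ hsup
    exact hμ.not_ge (le_ciSup (f := fun μ : {μ // μ < κ ∧ P μ} ↦ μ.1)
      ⟨κ, by rintro _ ⟨ν, rfl⟩; exact ν.2.1.le⟩ ⟨μ, hμκ, hPμ⟩)

/-- If `κ` is an uncountable measurable cardinal (the cardinality of a set `α` carrying a
nonprincipal `κ`-complete ultrafilter), then `κ` is the `κ`-th strongly inaccessible cardinal;
in particular `κ` is strongly inaccessible and the set of strongly inaccessible cardinals
below `κ` has cardinality `κ`. -/
theorem measurable_is_kth_inaccessible {α : Type u} (κ : Cardinal.{u})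
    (hκ : Cardinal.mk α = κ) (huncountable : Cardinal.aleph0 < κ) (U : Ultrafilter α)
    (hnonprincipal : ¬ ∃ Y : Set α, ∀ X : Set α, X ∈ U ↔ Y ⊆ X)
    (hcomplete : ∀ s : Set (Set α), Cardinal.mk s < κ → (∀ X ∈ s, X ∈ U) → ⋂₀ s ∈ U) :
    κ.IsInaccessible ∧
      Cardinal.mk {μ : Cardinal.{u} // μ < κ ∧ μ.IsInaccessible} = Cardinal.lift.{u + 1} κ := by
  have hU : (U : Filter α) ≤ cofinite := U.le_cofinite_or_eq_pure.resolve_right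
    fun ⟨x, hx⟩ ↦ hnonprincipal ⟨{x}, fun X ↦ by simp [hx]⟩
  have : CardinalInterFilter (U : Filter α) κ := ⟨hcomplete⟩
  have := CardinalInterFilter.toCountableInterFilter (U : Filter α) huncountable
  obtain ⟨d, hd, hunb⟩ := exists_forall_eventually_lt_ord hU hκ huncountable.le
  have hinacc : κ.IsInaccessible :=
    ⟨huncountable, le_cof_of_forall_eventually_lt hd hunb, U.isStrongPrelimit_of_mk_eq hU hκ⟩
  obtain ⟨f, hf⟩ := U.exists_isLeastUnbounded hd hunb
  exact ⟨hinacc, mk_subtype_lt_eq_lift_of_isRegular hinacc.isRegular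
    fun _ hc ↦ hf.exists_isInaccessible_btwn hinacc hc⟩
end

section
/- (ZFC) There exists a set of reals which is not determined: there is a set A ⊆ ω^ω such that in the infinite game G_ω(A), neither player I nor player II has a winning strategy. -/
/-- A play `x : ℕ → ℕ` is consistent with the strategy `σ` for player I
(who moves at the even positions) if each even entry of `x` is the value of `σ`
at the finite sequence of previous entries. -/
def ConsistentI (σ : List ℕ → ℕ) (x : ℕ → ℕ) : Prop :=
  ∀ n : ℕ, x (2 * n) = σ (List.ofFn fun i : Fin (2 * n) => x i)

/-- A play `x : ℕ → ℕ` is consistent with the strategy `τ` for player II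
(who moves at the odd positions) if each odd entry of `x` is the value of `τ`
at the finite sequence of previous entries. -/
def ConsistentII (τ : List ℕ → ℕ) (x : ℕ → ℕ) : Prop :=
  ∀ n : ℕ, x (2 * n + 1) = τ (List.ofFn fun i : Fin (2 * n + 1) => x i)

/-- `σ` is a winning strategy for player I in the game `G_ω(A)`:
every play consistent with `σ` lands in `A`. -/
def WinningI (A : Set (ℕ → ℕ)) (σ : List ℕ → ℕ) : Prop :=
  ∀ x : ℕ → ℕ, ConsistentI σ x → x ∈ A

/-- `τ` is a winning strategy for player II in the game `G_ω(A)`: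
every play consistent with `τ` lands outside `A`. -/
def WinningII (A : Set (ℕ → ℕ)) (τ : List ℕ → ℕ) : Prop :=
  ∀ x : ℕ → ℕ, ConsistentII τ x → x ∉ A


/-! Bernstein's construction. A strategy is a function `List ℕ → ℕ`, so there are only
continuum many of them, while each strategy has continuum many plays consistent with it
(the opponent's moves are arbitrary). Enumerate all strategies of both players in a
well-order of type the initial ordinal of `#(List ℕ → ℕ)` and pick, for each in turn, a
play consistent with it that differs from all plays picked before. Taking `A` to be the
set of plays picked for strategies of player II, every strategy of player II has a
consistent play in `A`, and every strategy of player I has a consistent play outside `A`. -/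

open Cardinal Set Function

universe u

theorem exists_injective_forall_mem {κ β : Type u} (S : κ → Set β) (hS : ∀ k, #κ ≤ #(S k)) :
    ∃ f : κ → β, Injective f ∧ ∀ k, f k ∈ S k := by
  -- recursion along a well-order of `κ` whose initial segments are smaller than `κ`
  obtain ⟨r, _, hr⟩ := Cardinal.exists_ord_eq κ
  have step : ∀ k (prev : ∀ j, r j k → β), ∃ x ∈ S k, ∀ j h, prev j h ≠ x := by
    intro k prev
    have hsmall : #(range fun j : {j // r j k} => prev j j.2) < #(S k) :=
      calc _ ≤ #{j // r j k} := mk_range_le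
        _ < #κ := card_typein_lt k hr
        _ ≤ #(S k) := hS k
    obtain ⟨x, hxS, hx⟩ : (S k \ range fun j : {j // r j k} => prev j j.2).Nonempty :=
      sdiff_nonempty.2 fun hsub => (mk_le_mk_of_subset hsub).not_gt hsmall
    exact ⟨x, hxS, fun j h hj => hx ⟨⟨j, h⟩, hj⟩⟩
  let f : κ → β := IsWellFounded.wf.fix (r := r) fun k prev => (step k prev).choose
  have hf : ∀ k, f k ∈ S k ∧ ∀ j, r j k → f j ≠ f k := fun k => by
    rw [show f k = (step k fun j _ => f j).choose from WellFounded.fix_eq _ _ k]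
    exact (step k _).choose_spec
  refine ⟨f, fun j k hjk => ?_, fun k => (hf k).1⟩
  rcases trichotomous_of r j k with hlt | heq | hgt
  · exact absurd hjk ((hf k).2 j hlt)
  · exact heq
  · exact absurd hjk.symm ((hf j).2 k hgt)

/-- The play in which the player moving at the positions `n` with `n % 2 = p` follows `σ`
and the opponent's `n`-th move is `y n`. -/
def followStrategy (σ : List ℕ → ℕ) (p : ℕ) (y : ℕ → ℕ) : ℕ → ℕ
  | n => if n % 2 = p then σ (List.ofFn fun i : Fin n => followStrategy σ p y i) else y (n / 2)

section followStrategy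

variable (σ : List ℕ → ℕ) (p : ℕ) (y : ℕ → ℕ)

theorem followStrategy_of_mod_eq {n : ℕ} (h : n % 2 = p) :
    followStrategy σ p y n = σ (List.ofFn fun i : Fin n => followStrategy σ p y i) := by
  rw [followStrategy, if_pos h]

theorem followStrategy_of_mod_ne {n : ℕ} (h : n % 2 ≠ p) : followStrategy σ p y n = y (n / 2) := by
  rw [followStrategy, if_neg h]

theorem consistentI_followStrategy : ConsistentI σ (followStrategy σ 0 y) :=
  fun n => followStrategy_of_mod_eq σ 0 y (by omega)

theorem consistentII_followStrategy : ConsistentII σ (followStrategy σ 1 y) :=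
  fun n => followStrategy_of_mod_eq σ 1 y (by omega)

theorem followStrategy_injective (hp : p < 2) : Injective (followStrategy σ p) := by
  intro y₁ y₂ h
  funext n
  have hpos : (2 * n + 1 - p) % 2 ≠ p := by omega
  have hidx : (2 * n + 1 - p) / 2 = n := by omega
  simpa only [followStrategy_of_mod_ne σ p _ hpos, hidx] using congrFun h (2 * n + 1 - p)

theorem mk_le_mk_setOf_consistentI : #(ℕ → ℕ) ≤ #{x | ConsistentI σ x} := by
  rw [← mk_range_eq _ (followStrategy_injective σ 0 (by omega))]
  exact mk_le_mk_of_subset (range_subset_iff.2 (consistentI_followStrategy σ))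

theorem mk_le_mk_setOf_consistentII : #(ℕ → ℕ) ≤ #{x | ConsistentII σ x} := by
  rw [← mk_range_eq _ (followStrategy_injective σ 1 (by omega))]
  exact mk_le_mk_of_subset (range_subset_iff.2 (consistentII_followStrategy σ))

end followStrategy

theorem mk_strategy_sum_strategy :
    #((List ℕ → ℕ) ⊕ (List ℕ → ℕ)) = #(ℕ → ℕ) := by
  have hstrat : #(List ℕ → ℕ) = #(ℕ → ℕ) :=
    mk_congr ((Denumerable.eqv (List ℕ)).arrowCongr (Equiv.refl ℕ))
  rw [mk_sum, lift_id, hstrat, add_eq_self (aleph0_le_mk _)]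

/-- (ZFC) There exists a set of reals (a set `A ⊆ ω^ω`) that is not determined:
neither player I nor player II has a winning strategy in `G_ω(A)`. -/
theorem exists_undetermined_set :
    ∃ A : Set (ℕ → ℕ), (¬ ∃ σ : List ℕ → ℕ, WinningI A σ) ∧
      (¬ ∃ τ : List ℕ → ℕ, WinningII A τ) := by
  obtain ⟨f, hf, hmem⟩ := exists_injective_forall_mem
    (Sum.elim (fun σ => {x | ConsistentI σ x}) (fun τ => {x | ConsistentII τ x}))
    (by rintro (σ | τ) <;> rw [mk_strategy_sum_strategy]
        exacts [mk_le_mk_setOf_consistentI σ, mk_le_mk_setOf_consistentII τ])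
  refine ⟨range (f ∘ Sum.inr), ?_, ?_⟩
  · rintro ⟨σ, hσ⟩
    obtain ⟨τ, hτ⟩ := hσ _ (hmem (Sum.inl σ))
    exact Sum.inr_ne_inl (hf hτ)
  · rintro ⟨τ, hτ⟩
    exact hτ _ (hmem (Sum.inr τ)) ⟨τ, rfl⟩
end

section
/- (Gale–Stewart) If A ⊆ ω^ω is either open or closed in the product topology on ω^ω (with ω discrete), then the game G_ω(A) is determined. -/
/-- `A` is determined if one of the two players has a winning strategy in `G_ω(A)`. -/
def Determined (A : Set (ℕ → ℕ)) : Prop :=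
  (∃ σ : List ℕ → ℕ, WinningI A σ) ∨ (∃ τ : List ℕ → ℕ, WinningII A τ)

open PiNat

namespace GaleStewart

variable {α : Type*}

def initSeg (x : ℕ → α) (n : ℕ) : List α := List.ofFn fun i : Fin n => x i

@[simp] lemma initSeg_length (x : ℕ → α) (n : ℕ) : (initSeg x n).length = n := List.length_ofFn

@[simp] lemma initSeg_zero (x : ℕ → α) : initSeg x 0 = [] := rfl

lemma initSeg_succ (x : ℕ → α) (n : ℕ) : initSeg x (n + 1) = initSeg x n ++ [x n] := by
  rw [initSeg, List.ofFn_succ', List.concat_eq_append]; rfl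

lemma initSeg_getD (x : ℕ → α) {i n : ℕ} (h : i < n) (d : α) : (initSeg x n).getD i d = x i := by
  simp [initSeg, List.getD_eq_getElem?_getD, h]

lemma initSeg_eq_iff_mem_cylinder {x y : ℕ → α} {n : ℕ} :
    initSeg y n = initSeg x n ↔ y ∈ cylinder x n := by
  simp [initSeg, List.ofFn_inj, funext_iff, Fin.forall_iff, mem_cylinder_iff]

def Follows (T : Set ℕ) (k : ℕ) (f : List α → α) (x : ℕ → α) : Prop :=
  ∀ m ∈ T, k ≤ m → x m = f (initSeg x m)

def CanForce (T : Set ℕ) (B : Set (ℕ → α)) (p : List α) : Prop :=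
  ∃ f : List α → α, ∀ x : ℕ → α, initSeg x p.length = p → Follows T p.length f x → x ∈ B

variable {T : Set ℕ} {B : Set (ℕ → α)} {p : List α}

lemma canForce_nil_iff :
    CanForce T B [] ↔ ∃ f : List α → α, ∀ x : ℕ → α, Follows T 0 f x → x ∈ B := by
  simp [CanForce]

lemma canForce_of_forall_initSeg_eq [Inhabited α]
    (h : ∀ x : ℕ → α, initSeg x p.length = p → x ∈ B) : CanForce T B p :=
  ⟨fun _ => default, fun x hx _ => h x hx⟩

lemma canForce_of_forall_append [Inhabited α] (h : ∀ a : α, CanForce T B (p ++ [a])) :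
    CanForce T B p := by
  choose f hf using h
  -- the strategy reads off the move played at `p` and continues with the strategy for that child
  refine ⟨fun q => f (q.getD p.length default) q, fun x hx hfol => ?_⟩
  have hchild : initSeg x (p ++ [x p.length]).length = p ++ [x p.length] := by
    rw [List.length_append, List.length_singleton, initSeg_succ, hx]
  refine hf _ x hchild fun m hm hpm => ?_
  rw [List.length_append, List.length_singleton] at hpm
  rw [hfol m hm (by omega)]
  dsimp only
  rw [initSeg_getD x (by omega)]

lemma canForce_of_append (hp : p.length ∈ T) {a : α} (h : CanForce T B (p ++ [a])) :
    CanForce T B p := by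
  classical
  obtain ⟨f, hf⟩ := h
  refine ⟨fun q => if q.length = p.length then a else f q, fun x hx hfol => ?_⟩
  have hxa : x p.length = a := by simpa using hfol p.length hp le_rfl
  have hchild : initSeg x (p ++ [a]).length = p ++ [a] := by
    rw [List.length_append, List.length_singleton, initSeg_succ, hx, hxa]
  refine hf x hchild fun m hm hpm => ?_
  rw [List.length_append, List.length_singleton] at hpm
  simpa [show m ≠ p.length by omega] using hfol m hm (by omega)

lemma exists_not_canForce_append [Inhabited α] (h : ¬ CanForce T B p) :
    ∃ a : α, ¬ CanForce T B (p ++ [a]) := by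
  contrapose! h
  exact canForce_of_forall_append h

open Classical in
noncomputable def nonLosingStrategy [Inhabited α] (T : Set ℕ) (B : Set (ℕ → α)) (q : List α) :
    α :=
  if h : CanForce T B q then default else (exists_not_canForce_append h).choose

lemma not_canForce_append_nonLosingStrategy [Inhabited α] {q : List α} (h : ¬ CanForce T B q) :
    ¬ CanForce T B (q ++ [nonLosingStrategy T B q]) := by
  rw [nonLosingStrategy, dif_neg h]
  exact (exists_not_canForce_append h).choose_spec

lemma not_canForce_initSeg [Inhabited α] (h : ¬ CanForce T B []) {x : ℕ → α}
    (hx : Follows Tᶜ 0 (nonLosingStrategy T B) x) (n : ℕ) : ¬ CanForce T B (initSeg x n) := by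
  induction n with
  | zero => simpa using h
  | succ n ih =>
    rw [initSeg_succ]
    by_cases hn : n ∈ T
    · exact fun hchild => ih (canForce_of_append (by simpa using hn) hchild)
    · rw [hx n hn n.zero_le]
      exact not_canForce_append_nonLosingStrategy ih

variable [TopologicalSpace α] [DiscreteTopology α]

lemma canForce_compl_of_not_canForce [Inhabited α] (hB : IsOpen B) (h : ¬ CanForce T B []) :
    CanForce Tᶜ Bᶜ [] := by
  refine canForce_nil_iff.mpr ⟨nonLosingStrategy T B, fun x hx hxB => ?_⟩
  obtain ⟨-, ⟨x', n, rfl⟩, hxn, hnB⟩ :=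
    (isTopologicalBasis_cylinders fun _ => α).exists_subset_of_mem_open hxB hB
  rw [mem_cylinder_iff_eq] at hxn
  refine not_canForce_initSeg h hx n (canForce_of_forall_initSeg_eq fun y hy => hnB ?_)
  rw [← hxn, ← initSeg_eq_iff_mem_cylinder]
  simpa using hy

theorem canForce_or_canForce_compl_of_isOpen [Inhabited α] (hB : IsOpen B) :
    CanForce T B [] ∨ CanForce Tᶜ Bᶜ [] :=
  or_iff_not_imp_left.mpr (canForce_compl_of_not_canForce hB)

theorem canForce_or_canForce_compl_of_isClosed [Inhabited α] (hB : IsClosed B) :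
    CanForce T B [] ∨ CanForce Tᶜ Bᶜ [] := by
  simpa only [compl_compl, or_comm] using
    canForce_or_canForce_compl_of_isOpen (T := Tᶜ) hB.isOpen_compl

lemma follows_even_iff {σ : List ℕ → ℕ} {x : ℕ → ℕ} :
    Follows {m | Even m} 0 σ x ↔ ConsistentI σ x := by
  refine ⟨fun h n => h (2 * n) (even_two_mul n) (Nat.zero_le _), ?_⟩
  rintro h m hm -
  obtain ⟨n, rfl⟩ := hm.two_dvd
  exact h n

lemma follows_compl_even_iff {τ : List ℕ → ℕ} {x : ℕ → ℕ} :
    Follows {m | Even m}ᶜ 0 τ x ↔ ConsistentII τ x := by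
  refine ⟨fun h n => h (2 * n + 1) (by simp [parity_simps]) (Nat.zero_le _), ?_⟩
  rintro h m hm -
  obtain ⟨n, rfl⟩ := Nat.not_even_iff_odd.mp hm
  exact h n

lemma canForce_even_iff {A : Set (ℕ → ℕ)} :
    CanForce {m | Even m} A [] ↔ ∃ σ, WinningI A σ := by
  simp only [canForce_nil_iff, follows_even_iff, WinningI]

lemma canForce_compl_even_iff {A : Set (ℕ → ℕ)} :
    CanForce {m | Even m}ᶜ Aᶜ [] ↔ ∃ τ, WinningII A τ := by
  simp only [canForce_nil_iff, follows_compl_even_iff, WinningII, Set.mem_compl_iff]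

end GaleStewart

open GaleStewart

/-- **Gale–Stewart**: every set `A ⊆ ω^ω` that is open or closed in the product topology
on `ℕ → ℕ` (with `ℕ` discrete) is determined. -/
theorem open_or_closed_determined (A : Set (ℕ → ℕ)) (hA : IsOpen A ∨ IsClosed A) :
    Determined A := by
  have h : CanForce {m | Even m} A [] ∨ CanForce {m | Even m}ᶜ Aᶜ [] :=
    hA.elim canForce_or_canForce_compl_of_isOpen canForce_or_canForce_compl_of_isClosed
  exact h.imp canForce_even_iff.mp canForce_compl_even_iff.mp
end
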